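/- arXiv:2008.04455 — 2 statements merged into one kernel-verified Lean document; each statement's English description precedes it below -/
import Mathlib

section
/- Fix α > 0 and k > 0, and let a_k(t) = e^{αt/2} for t < k, a_k(t) = (α(t-k)/2 + 1)e^{αk/2} for t ≥ k, and b_k(t) = e^{αt} for t < k, b_k(t) = (α(t-k)+1)e^{αk} for t ≥ k. Then there exist constants c₁, c₂ > 0 depending only on α (not on k) such that for all t ∈ ℝ where the derivatives exist: (a_k'(t))^{-2} (a_k(t))^4 ≤ c₁ e^{αt}, (a_k(t))² ≤ e^{αt}, and (b_k'(t))^{-1} (b_k(t))² ≤ c₂ e^{αt}. -/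
/-!
Both functions are instances of `truncatedExp β k`, which follows `exp (β t)` up to `k` and its
tangent line afterwards, with `β = α / 2` for `a` and `β = α` for `b`. The tangent line lies below
the convex exponential, which gives `a² ≤ e^{αt}`. Both remaining bounds reduce to
`f² / f' ≤ (4 / β) e^{βt}` for `f = truncatedExp β k`: before `k` the ratio is `e^{βt} / β`, after
`k` it is `(1 + v)² e^{βk} / β` with `v = β (t - k)`, and `(1 + v)² ≤ 4 e^v` because
`1 + v ≤ 2 (1 + v / 2) ≤ 2 e^{v/2}`.
-/

open Real

noncomputable def truncatedExp (β k t : ℝ) : ℝ :=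
  if t < k then exp (β * t) else (β * (t - k) + 1) * exp (β * k)

lemma one_add_sq_le_four_mul_exp {v : ℝ} (hv : -1 ≤ v) : (1 + v) ^ 2 ≤ 4 * exp v := by
  have hhalf : 1 + v ≤ 2 * exp (v / 2) := by linarith [add_one_le_exp (v / 2)]
  calc (1 + v) ^ 2 ≤ (2 * exp (v / 2)) ^ 2 := pow_le_pow_left₀ (by linarith) hhalf 2
    _ = 4 * exp v := by rw [mul_pow, ← exp_nat_mul]; norm_num; ring_nf

section truncatedExp

variable {β k t : ℝ}

lemma truncatedExp_of_lt (h : t < k) : truncatedExp β k t = exp (β * t) := if_pos h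

lemma truncatedExp_of_ge (h : k ≤ t) :
    truncatedExp β k t = (β * (t - k) + 1) * exp (β * k) := if_neg h.not_gt

lemma truncatedExp_le_exp : truncatedExp β k t ≤ exp (β * t) := by
  rcases lt_or_ge t k with h | h
  · exact (truncatedExp_of_lt h).le
  · calc truncatedExp β k t = (β * (t - k) + 1) * exp (β * k) := truncatedExp_of_ge h
      _ ≤ exp (β * (t - k)) * exp (β * k) := by gcongr; exact add_one_le_exp _
      _ = exp (β * t) := by rw [← exp_add]; ring_nf

lemma truncatedExp_pos (hβ : 0 ≤ β) : 0 < truncatedExp β k t := by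
  rcases lt_or_ge t k with h | h
  · rw [truncatedExp_of_lt h]; positivity
  · rw [truncatedExp_of_ge h]
    have : 0 ≤ β * (t - k) := mul_nonneg hβ (sub_nonneg.2 h)
    positivity

lemma hasDerivAt_truncatedExp_of_lt (h : t < k) :
    HasDerivAt (truncatedExp β k) (β * exp (β * t)) t := by
  have hderiv : HasDerivAt (fun s => exp (β * s)) (exp (β * t) * (β * 1)) t :=
    ((hasDerivAt_id t).const_mul β).exp
  refine (hderiv.congr_of_eventuallyEq ?_).congr_deriv (by ring)
  filter_upwards [Iio_mem_nhds h] with s hs using truncatedExp_of_lt hs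

lemma hasDerivAt_truncatedExp_of_gt (h : k < t) :
    HasDerivAt (truncatedExp β k) (β * exp (β * k)) t := by
  have hderiv : HasDerivAt (fun s => (β * (s - k) + 1) * exp (β * k)) (β * 1 * exp (β * k)) t :=
    ((((hasDerivAt_id t).sub_const k).const_mul β).add_const 1).mul_const _
  refine (hderiv.congr_of_eventuallyEq ?_).congr_deriv (by ring)
  filter_upwards [Ioi_mem_nhds h] with s hs using truncatedExp_of_ge (le_of_lt hs)

lemma deriv_truncatedExp_pos (hβ : 0 < β) (ht : t ≠ k) : 0 < deriv (truncatedExp β k) t := by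
  rcases ht.lt_or_gt with h | h
  · rw [(hasDerivAt_truncatedExp_of_lt h).deriv]; positivity
  · rw [(hasDerivAt_truncatedExp_of_gt h).deriv]; positivity

lemma deriv_truncatedExp_inv_mul_sq_le (hβ : 0 < β) (ht : t ≠ k) :
    deriv (truncatedExp β k) t ^ (-1 : ℤ) * truncatedExp β k t ^ 2 ≤ 4 / β * exp (β * t) := by
  rw [zpow_neg_one, inv_mul_le_iff₀ (deriv_truncatedExp_pos hβ ht)]
  rcases ht.lt_or_gt with h | h
  · rw [(hasDerivAt_truncatedExp_of_lt h).deriv, truncatedExp_of_lt h]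
    field_simp
    nlinarith [exp_pos (β * t)]
  · have hsplit : exp (β * t) = exp (β * (t - k)) * exp (β * k) := by rw [← exp_add]; ring_nf
    set v := β * (t - k)
    have hv : 0 ≤ v := mul_nonneg hβ.le (sub_nonneg.2 h.le)
    rw [(hasDerivAt_truncatedExp_of_gt h).deriv, truncatedExp_of_ge h.le, hsplit]
    field_simp
    have := one_add_sq_le_four_mul_exp (show -1 ≤ v by linarith)
    nlinarith [exp_pos (β * k)]

end truncatedExp

/-- Growth bounds for the truncated exponentials `a_k`, `b_k`, with constants
depending only on `α` (not on `k`):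
`(a_k')⁻² a_k⁴ ≤ c₁ e^{αt}`, `a_k² ≤ e^{αt}` and `(b_k')⁻¹ b_k² ≤ c₂ e^{αt}`. -/
theorem truncated_exponential_bounds (α : ℝ) (hα : 0 < α) :
    ∃ c₁ c₂ : ℝ, 0 < c₁ ∧ 0 < c₂ ∧
      ∀ k : ℝ, 0 < k →
      ∀ a b : ℝ → ℝ,
        (∀ t, a t = if t < k then Real.exp (α * t / 2)
            else (α * (t - k) / 2 + 1) * Real.exp (α * k / 2)) →
        (∀ t, b t = if t < k then Real.exp (α * t)
            else (α * (t - k) + 1) * Real.exp (α * k)) →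
        ∀ t : ℝ, t ≠ k →
          (deriv a t) ^ (-2 : ℤ) * (a t) ^ 4 ≤ c₁ * Real.exp (α * t) ∧
          (a t) ^ 2 ≤ Real.exp (α * t) ∧
          (deriv b t) ^ (-1 : ℤ) * (b t) ^ 2 ≤ c₂ * Real.exp (α * t) := by
  refine ⟨64 / α ^ 2, 4 / α, by positivity, by positivity, fun k _ a b ha hb t ht => ?_⟩
  obtain rfl : a = truncatedExp (α / 2) k := by
    ext s; rw [ha, truncatedExp]; split_ifs <;> ring_nf
  obtain rfl : b = truncatedExp α k := funext hb
  have hα2 : 0 < α / 2 := by positivity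
  have hsq : exp (α / 2 * t) ^ 2 = exp (α * t) := by rw [← exp_nat_mul]; ring_nf
  refine ⟨?_, ?_, deriv_truncatedExp_inv_mul_sq_le hα ht⟩
  · have hratio_nonneg : 0 ≤ deriv (truncatedExp (α / 2) k) t ^ (-1 : ℤ) *
        truncatedExp (α / 2) k t ^ 2 := by
      have := deriv_truncatedExp_pos hα2 ht
      positivity
    calc deriv (truncatedExp (α / 2) k) t ^ (-2 : ℤ) * truncatedExp (α / 2) k t ^ 4
        = (deriv (truncatedExp (α / 2) k) t ^ (-1 : ℤ) * truncatedExp (α / 2) k t ^ 2) ^ 2 := by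
          simp only [zpow_neg, zpow_ofNat]; ring
      _ ≤ (4 / (α / 2) * exp (α / 2 * t)) ^ 2 :=
          pow_le_pow_left₀ hratio_nonneg (deriv_truncatedExp_inv_mul_sq_le hα2 ht) 2
      _ = 64 / α ^ 2 * exp (α * t) := by rw [mul_pow, hsq]; field_simp; ring
  · calc truncatedExp (α / 2) k t ^ 2 ≤ exp (α / 2 * t) ^ 2 :=
          pow_le_pow_left₀ (truncatedExp_pos hα2.le).le truncatedExp_le_exp 2
      _ = exp (α * t) := hsq
end

section
/- Fix α > 1/2 and k > 0. Define a_k(t) = t^α for 0 < t < k and a_k(t) = [α²(t-k)/((2α-1)k) + 1] k^α for t ≥ k; and b_k(t) = t^{2α-1} for 0 < t < k and b_k(t) = [α²(t-k)/((2α-1)k) + 1] k^{2α-1} for t ≥ k. Then for all t > 0: (a_k'(t))² = (α²/(2α-1)) b_k'(t) at points of differentiability, and (a_k(t))² ≥ t·b_k(t). -/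
/-!
Below `k` both functions are powers, and `(t ^ α) ^ 2 = t · t ^ (2α - 1)` gives the identity between
the derivatives and equality in `t · b ≤ a ²`. Above `k` both are multiples of the same affine ramp
`ℓ` with `ℓ(k) = 1`, whose slope `α² / ((2α - 1) k)` is chosen to make the derivative identity hold;
the inequality then reduces to `t ≤ k ℓ(t)`, and `k ℓ(t) - t = (t - k)(α - 1)² / (2α - 1) ≥ 0`.
-/

open Filter Topology

namespace TruncatedPower

variable {α k t : ℝ}

lemma sq_rpow_eq_mul_rpow (α : ℝ) (ht : 0 < t) : (t ^ α) ^ 2 = t * t ^ (2 * α - 1) := by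
  rw [sq, ← Real.rpow_add ht, show α + α = 1 + (2 * α - 1) by ring, Real.rpow_add ht,
    Real.rpow_one]

lemma sq_deriv_rpow (hα : 2 * α - 1 ≠ 0) (ht : 0 < t) :
    deriv (· ^ α) t ^ 2 = α ^ 2 / (2 * α - 1) * deriv (· ^ (2 * α - 1)) t := by
  have hpow : (t ^ (α - 1)) ^ 2 = t ^ (2 * α - 1 - 1) := by
    rw [← Real.rpow_natCast, ← Real.rpow_mul ht.le]
    ring_nf
  rw [Real.deriv_rpow_const, Real.deriv_rpow_const, mul_pow, hpow, ← mul_assoc,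
    div_mul_cancel₀ _ hα]

/-- The affine continuation of both truncated powers past `k`, normalised by `ramp α k k = 1`. -/
noncomputable def ramp (α k t : ℝ) : ℝ := α ^ 2 * (t - k) / ((2 * α - 1) * k) + 1

lemma hasDerivAt_ramp (α k t : ℝ) : HasDerivAt (ramp α k) (α ^ 2 / ((2 * α - 1) * k)) t := by
  have h := (((hasDerivAt_id t).sub_const k).const_mul (α ^ 2)).div_const ((2 * α - 1) * k)
    |>.add_const 1
  exact h.congr_deriv (by ring)

lemma sq_deriv_ramp_mul (hk : 0 < k) :
    deriv (fun s ↦ ramp α k s * k ^ α) t ^ 2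
      = α ^ 2 / (2 * α - 1) * deriv (fun s ↦ ramp α k s * k ^ (2 * α - 1)) t := by
  rw [((hasDerivAt_ramp α k t).mul_const _).deriv, ((hasDerivAt_ramp α k t).mul_const _).deriv,
    mul_pow, sq_rpow_eq_mul_rpow α hk]
  field_simp

lemma ramp_mul_sub (hα : 2 * α - 1 ≠ 0) (hk : k ≠ 0) :
    ramp α k t * k - t = (t - k) * (α - 1) ^ 2 / (2 * α - 1) := by
  have hd : (2 * α - 1) * k ≠ 0 := mul_ne_zero hα hk
  rw [ramp, div_add_one hd, div_mul_eq_mul_div, div_sub' hd, div_eq_div_iff hd hα]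
  ring

lemma one_le_ramp (hα : 1 / 2 < α) (hk : 0 < k) (ht : k ≤ t) : 1 ≤ ramp α k t := by
  have hslope : 0 ≤ α ^ 2 * (t - k) / ((2 * α - 1) * k) :=
    div_nonneg (mul_nonneg (sq_nonneg α) (by linarith)) (mul_nonneg (by linarith) hk.le)
  unfold ramp
  linarith

lemma mul_ramp_mul_le_sq (hα : 1 / 2 < α) (hk : 0 < k) (ht : k ≤ t) :
    t * (ramp α k t * k ^ (2 * α - 1)) ≤ (ramp α k t * k ^ α) ^ 2 := by
  have hle : t ≤ ramp α k t * k := by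
    have hgap := ramp_mul_sub (t := t) (by linarith : 2 * α - 1 ≠ 0) hk.ne'
    have hgap_nonneg : 0 ≤ (t - k) * (α - 1) ^ 2 / (2 * α - 1) :=
      div_nonneg (mul_nonneg (by linarith) (sq_nonneg _)) (by linarith)
    linarith
  have hramp := one_le_ramp hα hk ht
  rw [mul_pow, sq_rpow_eq_mul_rpow α hk]
  calc t * (ramp α k t * k ^ (2 * α - 1))
      ≤ ramp α k t * k * (ramp α k t * k ^ (2 * α - 1)) := by gcongr
    _ = ramp α k t ^ 2 * (k * k ^ (2 * α - 1)) := by ring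

lemma eventuallyEq_left_of_lt {f g h : ℝ → ℝ}
    (hf : ∀ s, 0 < s → f s = if s < k then g s else h s) (ht : 0 < t) (htk : t < k) :
    f =ᶠ[𝓝 t] g := by
  filter_upwards [Ioo_mem_nhds ht htk] with s hs
  rw [hf s hs.1, if_pos hs.2]

lemma eventuallyEq_right_of_gt {f g h : ℝ → ℝ}
    (hf : ∀ s, 0 < s → f s = if s < k then g s else h s) (hk : 0 < k) (htk : k < t) :
    f =ᶠ[𝓝 t] h := by
  filter_upwards [Ioi_mem_nhds htk] with s hs
  rw [hf s (hk.trans hs), if_neg hs.not_gt]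

end TruncatedPower

open TruncatedPower in
/-- Properties of the truncated powers `a_k`, `b_k`:
`(a_k')² = (α²/(2α-1)) b_k'` away from the corner, and `a_k² ≥ t b_k` on `(0,∞)`. -/
theorem truncated_power_identities (α k : ℝ) (hα : 1 / 2 < α) (hk : 0 < k)
    (a b : ℝ → ℝ)
    (ha : ∀ t, 0 < t → a t = if t < k then t ^ α
        else (α ^ 2 * (t - k) / ((2 * α - 1) * k) + 1) * k ^ α)
    (hb : ∀ t, 0 < t → b t = if t < k then t ^ (2 * α - 1)
        else (α ^ 2 * (t - k) / ((2 * α - 1) * k) + 1) * k ^ (2 * α - 1)) :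
    (∀ t : ℝ, 0 < t → t ≠ k → (deriv a t) ^ 2 = (α ^ 2 / (2 * α - 1)) * deriv b t) ∧
    (∀ t : ℝ, 0 < t → t * b t ≤ (a t) ^ 2) := by
  have h2α : 2 * α - 1 ≠ 0 := by linarith
  refine ⟨fun t ht htk ↦ ?_, fun t ht ↦ ?_⟩
  · rcases htk.lt_or_gt with hlt | hgt
    · rw [(eventuallyEq_left_of_lt ha ht hlt).deriv_eq,
        (eventuallyEq_left_of_lt hb ht hlt).deriv_eq]
      exact sq_deriv_rpow h2α ht
    · rw [(eventuallyEq_right_of_gt ha hk hgt).deriv_eq,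
        (eventuallyEq_right_of_gt hb hk hgt).deriv_eq]
      exact sq_deriv_ramp_mul hk
  · rw [ha t ht, hb t ht]
    split_ifs with hlt
    · exact (sq_rpow_eq_mul_rpow α ht).ge
    · exact mul_ramp_mul_le_sq hα hk (not_lt.1 hlt)
end
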